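/- Monotonicity of waiting time in queue length under greedy scheduling: if q ≤ q' jobs with the same duration distribution bound are assigned greedily to C servers, and the first q job durations coincide, then the waiting time (minimum server load) after q jobs is at most the waiting time after q' jobs. Hence increasing the queue length at a node can only increase (weakly) the waiting time of an arriving aircraft. -/
import Mathlib


/-- Monotonicity of waiting time in queue length under greedy scheduling: if `q ≤ q'`
jobs (the first `q` durations coinciding, all positive) are assigned greedily to `C`
least-loaded servers, then the waiting time (minimum server load) after `q` jobs is
at most the waiting time after `q'` jobs. Hence increasing the queue length at a node
can only (weakly) increase the waiting time of an arriving aircraft. -/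
theorem stmt19 (C q q' : ℕ) (hC : 1 ≤ C) (hqq' : q ≤ q') (d : ℕ → ℝ)
    (hd : ∀ j < q', 0 < d j)
    (loads : ℕ → Fin C → ℝ)
    (h0 : ∀ i, loads 0 i = 0)
    (hstep : ∀ j < q', ∃ i : Fin C, (∀ i', loads j i ≤ loads j i') ∧
      loads (j + 1) = Function.update (loads j) i (loads j i + d j)) :
    ∃ i : Fin C, ∀ i' : Fin C, loads q i ≤ loads q' i' := by
  haveI : Nonempty (Fin C) := ⟨⟨0, hC⟩⟩
  -- pointwise monotonicity of loads
  have mono : ∀ j, j < q' → ∀ i, loads j i ≤ loads (j + 1) i := by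
    intro j hj i
    obtain ⟨k, hk, heq⟩ := hstep j hj
    rw [heq]
    by_cases h : i = k
    · subst h
      simp [Function.update_self]
      exact (hd j hj).le
    · rw [Function.update_of_ne h]
  have mono' : ∀ j, q ≤ j → j ≤ q' → ∀ i, loads q i ≤ loads j i := by
    intro j
    induction j with
    | zero => intro hqj _ i; obtain rfl : q = 0 := Nat.le_zero.mp hqj; exact le_rfl
    | succ n ih =>
      intro hqj hjq' i
      rcases Nat.lt_or_ge q (n + 1) with h | h
      · exact le_trans (ih (by omega) (by omega) i) (mono n (by omega) i)
      · have : q = n + 1 := by omega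
        rw [this]
  obtain ⟨i, hi⟩ := Finite.exists_min (loads q)
  exact ⟨i, fun i' => le_trans (hi i') (mono' q' hqq' le_rfl i')⟩
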